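/- For unit vectors ψ_x, ψ_y and projections P_i as above, |⟨ψ_x, (I - O_x O_y) ψ_y⟩| ≤ 2 ∑_{i : x_i ≠ y_i} ‖P_i ψ_x‖ · ‖P_i ψ_y‖. -/

import Mathlib

/-! The identity `I - O_x O_y = 2 ∑_{x_i ≠ y_i} P_i` turns the left-hand side into
`2 ∑_{x_i ≠ y_i} ⟪ψ_x, P_i ψ_y⟫ = 2 ∑_{x_i ≠ y_i} ⟪P_i ψ_x, P_i ψ_y⟫`; the bound follows from the
triangle inequality and Cauchy–Schwarz on each term. -/

open scoped InnerProductSpace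

section
variable {ι Z : Type*} [Fintype ι] [DecidableEq ι]

def oraclePhase (x : ι → Bool) : Option ι → ℂ
  | none => 1
  | some i => if x i then -1 else 1

local notation "H" => EuclideanSpace ℂ (Option ι × Z)

theorem sub_oracle_oracle_eq_sum_blockProj {x y : ι → Bool} {Ox Oy : H → H}
    (hOx : ∀ ψ p, Ox ψ p = oraclePhase x p.1 * ψ p) (hOy : ∀ ψ p, Oy ψ p = oraclePhase y p.1 * ψ p)
    {P : ι → H → H} (hP : ∀ i ψ p, P i ψ p = if p.1 = some i then ψ p else 0) (ψ : H) :
    ψ - Ox (Oy ψ) = (2 : ℂ) • ∑ i ∈ Finset.univ.filter (fun i => x i ≠ y i), P i ψ := by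
  ext ⟨_ | j, z⟩
  · simp [hOx, hOy, hP, oraclePhase]
  · cases hx : x j <;> cases hy : y j <;> simp [hOx, hOy, hP, oraclePhase, hx, hy] <;> ring

variable [Fintype Z]

theorem inner_blockProj_right {P : ι → H → H}
    (hP : ∀ i ψ p, P i ψ p = if p.1 = some i then ψ p else 0) (i : ι) (φ ψ : H) :
    ⟪φ, P i ψ⟫_ℂ = ⟪P i φ, P i ψ⟫_ℂ := by
  simp only [PiLp.inner_apply, hP]
  refine Finset.sum_congr rfl fun p _ => ?_
  split_ifs <;> simp

end

theorem stmt_2 (N : ℕ) (Z : Type) [Fintype Z] (x y : Fin N → Bool)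
    (ψx ψy : EuclideanSpace ℂ (Option (Fin N) × Z))
    (Ox Oy : EuclideanSpace ℂ (Option (Fin N) × Z) → EuclideanSpace ℂ (Option (Fin N) × Z))
    (hOx : ∀ ψ p, Ox ψ p = match p.1 with
      | none => ψ p
      | some i => (if x i then -1 else 1) * ψ p)
    (hOy : ∀ ψ p, Oy ψ p = match p.1 with
      | none => ψ p
      | some i => (if y i then -1 else 1) * ψ p)
    (P : Fin N → EuclideanSpace ℂ (Option (Fin N) × Z) → EuclideanSpace ℂ (Option (Fin N) × Z))
    (hP : ∀ i ψ p, P i ψ p = if p.1 = some i then ψ p else 0) :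
    ‖(⟪ψx, ψy - Ox (Oy ψy)⟫_ℂ)‖ ≤
      2 * ∑ i ∈ Finset.univ.filter (fun i => x i ≠ y i), ‖P i ψx‖ * ‖P i ψy‖ := by
  have hOx' : ∀ ψ p, Ox ψ p = oraclePhase x p.1 * ψ p := by
    rintro ψ ⟨_ | i, z⟩ <;> simp [hOx, oraclePhase]
  have hOy' : ∀ ψ p, Oy ψ p = oraclePhase y p.1 * ψ p := by
    rintro ψ ⟨_ | i, z⟩ <;> simp [hOy, oraclePhase]
  rw [sub_oracle_oracle_eq_sum_blockProj hOx' hOy' hP, inner_smul_right, inner_sum, norm_mul,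
    Complex.norm_ofNat]
  gcongr 2 * ?_
  refine (norm_sum_le _ _).trans (Finset.sum_le_sum fun i _ => ?_)
  rw [inner_blockProj_right hP]
  exact norm_inner_le_norm _ _
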